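/- arXiv:2504.00855 — 3 statements merged into one kernel-verified Lean document; each statement's English description precedes it below -/
import Mathlib

section
/- The eigenvalues of the complex 3×3 matrix L = (i/|j|) · [[0, -c²j₃, a²j₂], [b²j₃, 0, -a²j₁], [-b²j₂, c²j₁, 0]] (for a nonzero vector j = (j₁,j₂,j₃) ∈ ℝ³ and real parameters a,b,c) are μ₀ = 0 and μ± = ±(1/|j|)·√(a²b²j₂² + b²c²j₃² + a²c²j₁²). -/
open Matrix

/-- The matrix `L = (i/|j|) · [[0, -c²j₃, a²j₂], [b²j₃, 0, -a²j₁], [-b²j₂, c²j₁, 0]]`. -/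
noncomputable def Lmat (a b c : ℝ) (j : Fin 3 → ℝ) : Matrix (Fin 3) (Fin 3) ℂ :=
  (Complex.I / ((Real.sqrt (j 0 ^ 2 + j 1 ^ 2 + j 2 ^ 2) : ℝ) : ℂ)) •
    !![0, ((-(c ^ 2 * j 2) : ℝ) : ℂ), ((a ^ 2 * j 1 : ℝ) : ℂ);
       ((b ^ 2 * j 2 : ℝ) : ℂ), 0, ((-(a ^ 2 * j 0) : ℝ) : ℂ);
       ((-(b ^ 2 * j 1) : ℝ) : ℂ), ((c ^ 2 * j 0 : ℝ) : ℂ), 0]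

theorem eigenvalues_of_Lmat (a b c : ℝ) (j : Fin 3 → ℝ) (hj : j ≠ 0) :
    spectrum ℂ (Lmat a b c j) =
      {0,
       ((Real.sqrt (a ^ 2 * b ^ 2 * j 1 ^ 2 + b ^ 2 * c ^ 2 * j 2 ^ 2 +
            a ^ 2 * c ^ 2 * j 0 ^ 2) / Real.sqrt (j 0 ^ 2 + j 1 ^ 2 + j 2 ^ 2) : ℝ) : ℂ),
       ((-(Real.sqrt (a ^ 2 * b ^ 2 * j 1 ^ 2 + b ^ 2 * c ^ 2 * j 2 ^ 2 +
            a ^ 2 * c ^ 2 * j 0 ^ 2) / Real.sqrt (j 0 ^ 2 + j 1 ^ 2 + j 2 ^ 2)) : ℝ) : ℂ)} := by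
  set S : ℝ := a ^ 2 * b ^ 2 * j 1 ^ 2 + b ^ 2 * c ^ 2 * j 2 ^ 2 + a ^ 2 * c ^ 2 * j 0 ^ 2 with hS
  set N : ℝ := Real.sqrt (j 0 ^ 2 + j 1 ^ 2 + j 2 ^ 2) with hNdef
  have hsum : 0 < j 0 ^ 2 + j 1 ^ 2 + j 2 ^ 2 := by
    by_contra h
    push_neg at h
    have h0 : j 0 = 0 := by
      have : j 0 ^ 2 = 0 := le_antisymm (by nlinarith [sq_nonneg (j 1), sq_nonneg (j 2)]) (sq_nonneg _)
      exact pow_eq_zero_iff (by norm_num) |>.mp this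
    have h1 : j 1 = 0 := by
      have : j 1 ^ 2 = 0 := le_antisymm (by nlinarith [sq_nonneg (j 0), sq_nonneg (j 2)]) (sq_nonneg _)
      exact pow_eq_zero_iff (by norm_num) |>.mp this
    have h2 : j 2 = 0 := by
      have : j 2 ^ 2 = 0 := le_antisymm (by nlinarith [sq_nonneg (j 0), sq_nonneg (j 1)]) (sq_nonneg _)
      exact pow_eq_zero_iff (by norm_num) |>.mp this
    exact hj (funext fun i => by fin_cases i <;> simpa)
  have hN : 0 < N := Real.sqrt_pos.mpr hsum
  have hNne : (N : ℂ) ≠ 0 := by exact_mod_cast hN.ne'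
  have hSnn : 0 ≤ S := by positivity
  have hN2 : (N : ℂ) ^ 2 = ((j 0 ^ 2 + j 1 ^ 2 + j 2 ^ 2 : ℝ) : ℂ) := by
    rw [hNdef]; norm_cast; exact Real.sq_sqrt hsum.le
  set s : ℂ := ((Real.sqrt S / N : ℝ) : ℂ) with hsdef
  have hs2 : s ^ 2 * (N : ℂ) ^ 2 = ((S : ℝ) : ℂ) := by
    rw [hsdef]
    push_cast
    rw [div_pow, div_mul_cancel₀]
    · norm_cast; exact Real.sq_sqrt hSnn
    · exact pow_ne_zero _ hNne
  ext μ
  rw [spectrum.mem_iff, Matrix.isUnit_iff_isUnit_det, isUnit_iff_ne_zero, not_not]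
  have hmat : (algebraMap ℂ (Matrix (Fin 3) (Fin 3) ℂ)) μ - Lmat a b c j =
      !![μ, -(Complex.I / N * ((-(c ^ 2 * j 2) : ℝ) : ℂ)), -(Complex.I / N * ((a ^ 2 * j 1 : ℝ) : ℂ));
         -(Complex.I / N * ((b ^ 2 * j 2 : ℝ) : ℂ)), μ, -(Complex.I / N * ((-(a ^ 2 * j 0) : ℝ) : ℂ));
         -(Complex.I / N * ((-(b ^ 2 * j 1) : ℝ) : ℂ)), -(Complex.I / N * ((c ^ 2 * j 0 : ℝ) : ℂ)), μ] := by
    ext i k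
    fin_cases i <;> fin_cases k <;>
      simp [Lmat, Matrix.algebraMap_eq_diagonal, Matrix.smul_apply, ← hNdef]
  have hdet : ((algebraMap ℂ (Matrix (Fin 3) (Fin 3) ℂ)) μ - Lmat a b c j).det
      = μ * (μ - s) * (μ + s) := by
    rw [hmat, Matrix.det_fin_three]
    simp only [Matrix.cons_val', Matrix.cons_val_zero, Matrix.cons_val_one, Matrix.head_cons,
      Matrix.empty_val', Matrix.cons_val_fin_one, Matrix.head_fin_const, Matrix.cons_val_two,
      Matrix.tail_cons, Matrix.of_apply]
    push_cast
    have hI : Complex.I ^ 2 = -1 := Complex.I_sq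
    have hs2' : s ^ 2 * (N : ℂ) ^ 2 =
        (a:ℂ)^2*(b:ℂ)^2*((j 1 : ℝ):ℂ)^2 + (b:ℂ)^2*(c:ℂ)^2*((j 2 : ℝ):ℂ)^2 +
          (a:ℂ)^2*(c:ℂ)^2*((j 0 : ℝ):ℂ)^2 := by
      rw [hs2, hS]; push_cast; ring
    have hNN : (N:ℂ) * ((N:ℂ))⁻¹ = 1 := mul_inv_cancel₀ hNne
    linear_combination (-(μ * s^2) * ((N:ℂ)*((N:ℂ))⁻¹ + 1)) * hNN + (μ / (N:ℂ)^2) * hs2' +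
      (μ * ((a:ℂ)^2*(b:ℂ)^2*((j 1 : ℝ):ℂ)^2 + (b:ℂ)^2*(c:ℂ)^2*((j 2 : ℝ):ℂ)^2 +
          (a:ℂ)^2*(c:ℂ)^2*((j 0 : ℝ):ℂ)^2) / (N:ℂ)^2) * hI
  rw [hdet]
  have hneg : ((-(Real.sqrt S / N) : ℝ) : ℂ) = -s := by rw [hsdef]; push_cast; ring
  rw [hneg]
  simp only [Set.mem_insert_iff, Set.mem_singleton_iff, mul_eq_zero, sub_eq_zero,
    add_eq_zero_iff_eq_neg]
  tauto
end

section
/- If at least two of the three parameters a, b, c are nonzero, then there exists a nonzero j ∈ ℝ³ such that the matrix L = (i/|j|)·[[0, -c²j₃, a²j₂], [b²j₃, 0, -a²j₁], [-b²j₂, c²j₁, 0]] has a simple eigenvalue with strictly positive real part. -/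
open Matrix

/-!
Write `L = (i/|j|) K`. The real matrix `K` has zero diagonal and zero determinant, so its
characteristic polynomial is `X³ + s X`, where `s = a²c²j₁² + a²b²j₂² + b²c²j₃² ≥ 0` is the sum of
its principal `2 × 2` minors. Since `i² = -1`, the characteristic polynomial of `L` is
`X³ - (s/|j|²) X`, so as soon as `s > 0` the positive real number `√s/|j|` is a simple eigenvalue
of `L`. For `j = (1, 1, 1)`, `s = a²b² + b²c² + c²a²` is positive when two of `a, b, c` are nonzero.
-/

open Polynomial

theorem rootMultiplicity_X_pow_three_sub_C_sq_mul_X {K : Type*} [Field K] [NeZero (2 : K)]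
    {μ : K} (hμ : μ ≠ 0) : rootMultiplicity μ (X ^ 3 - C (μ ^ 2) * X) = 1 := by
  have hfactor : (X ^ 3 - C (μ ^ 2) * X : K[X]) = (X - C μ) * (X * (X + C μ)) := by
    rw [C_pow]; ring
  have hrest : ¬ (X * (X + C μ) : K[X]).IsRoot μ := by
    simp [← two_mul, hμ, two_ne_zero]
  rw [hfactor, rootMultiplicity_mul (mul_ne_zero (X_sub_C_ne_zero μ)
      (mul_ne_zero X_ne_zero (X_add_C_ne_zero μ))),
    rootMultiplicity_X_sub_C_self, rootMultiplicity_eq_zero hrest]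

theorem mem_spectrum_of_rootMultiplicity_charpoly_pos {n K : Type*} [Fintype n] [DecidableEq n]
    [CommRing K] [Nontrivial K] {M : Matrix n n K} {μ : K} (h : 0 < rootMultiplicity μ M.charpoly) :
    μ ∈ spectrum K M :=
  mem_spectrum_of_isRoot_charpoly ((rootMultiplicity_pos M.charpoly_monic.ne_zero).1 h)

noncomputable def sqEigenvalue (a b c : ℝ) (j : Fin 3 → ℝ) : ℝ :=
  (a ^ 2 * c ^ 2 * j 0 ^ 2 + a ^ 2 * b ^ 2 * j 1 ^ 2 + b ^ 2 * c ^ 2 * j 2 ^ 2) /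
    (j 0 ^ 2 + j 1 ^ 2 + j 2 ^ 2)

theorem charpoly_Lmat (a b c : ℝ) (j : Fin 3 → ℝ) :
    (Lmat a b c j).charpoly = X ^ 3 - C (sqEigenvalue a b c j : ℂ) * X := by
  have hscale : (Complex.I / ((Real.sqrt (j 0 ^ 2 + j 1 ^ 2 + j 2 ^ 2) : ℝ) : ℂ)) ^ 2 =
      -((j 0 ^ 2 + j 1 ^ 2 + j 2 ^ 2 : ℝ) : ℂ)⁻¹ := by
    rw [div_pow, Complex.I_sq, ← Complex.ofReal_pow, Real.sq_sqrt (by positivity)]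
    ring
  -- writing `s/|j|²` as `-(i/|j|)² s` turns the claim into a ring identity in the scalar `i/|j|`
  rw [charpoly, det_fin_three, sqEigenvalue, Complex.ofReal_div, div_eq_mul_inv,
    ← neg_neg (Complex.ofReal _)⁻¹, ← hscale]
  simp only [Lmat, charmatrix_apply, Fin.isValue, diagonal_apply_eq, Complex.ofReal_neg,
    Complex.ofReal_mul, Complex.ofReal_pow, Matrix.smul_apply, of_apply, cons_val', cons_val_zero,
    cons_val_fin_one, smul_eq_mul, mul_zero, map_zero, sub_zero, cons_val_one, cons_val, ne_eq,
    Fin.reduceEq, not_false_eq_true, diagonal_apply_ne, mul_neg, map_neg, map_mul, map_pow,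
    sub_neg_eq_add, zero_add, zero_sub, zero_ne_one, one_ne_zero, neg_mul, neg_neg,
    Complex.ofReal_add, map_add]
  ring

theorem exists_simple_eigenvalue_re_pos_Lmat (a b c : ℝ) (j : Fin 3 → ℝ)
    (hpos : 0 < sqEigenvalue a b c j) :
    ∃ μ : ℂ, μ ∈ spectrum ℂ (Lmat a b c j) ∧ 0 < μ.re ∧
      rootMultiplicity μ (Lmat a b c j).charpoly = 1 := by
  set μ : ℂ := (Real.sqrt (sqEigenvalue a b c j) : ℂ)
  have hμ_re : 0 < μ.re := by simpa [μ] using hpos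
  have hμ_sq : μ ^ 2 = sqEigenvalue a b c j := by
    rw [← Complex.ofReal_pow, Real.sq_sqrt hpos.le]
  have hsimple : rootMultiplicity μ (Lmat a b c j).charpoly = 1 := by
    rw [charpoly_Lmat, ← hμ_sq]
    exact rootMultiplicity_X_pow_three_sub_C_sq_mul_X (by rintro h; simp [h] at hμ_re)
  exact ⟨μ, mem_spectrum_of_rootMultiplicity_charpoly_pos (by omega), hμ_re, hsimple⟩

theorem exists_unstable_simple_eigenvalue (a b c : ℝ)
    (h : (a ≠ 0 ∧ b ≠ 0) ∨ (a ≠ 0 ∧ c ≠ 0) ∨ (b ≠ 0 ∧ c ≠ 0)) :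
    ∃ j : Fin 3 → ℝ, j ≠ 0 ∧ ∃ μ : ℂ, μ ∈ spectrum ℂ (Lmat a b c j) ∧ 0 < μ.re ∧
      Polynomial.rootMultiplicity μ (Matrix.charpoly (Lmat a b c j)) = 1 := by
  have hpos : 0 < sqEigenvalue a b c ![1, 1, 1] := by
    simp only [sqEigenvalue, Fin.isValue, cons_val_zero, cons_val_one, cons_val, one_pow, mul_one]
    rcases h with ⟨ha, hb⟩ | ⟨ha, hc⟩ | ⟨hb, hc⟩ <;> positivity
  refine ⟨![1, 1, 1], fun h1 => by simpa using congrFun h1 0, ?_⟩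
  exact exists_simple_eigenvalue_re_pos_Lmat a b c _ hpos
end

section
/- For any real diagonal matrix D = diag(α₁, α₂, α₃) and any unit vector j ∈ ℝ³, the eigenvalues of the complex matrix M defined by M v = i (j × (D v)) are μ₀ = 0 and μ± = ±√(α₁α₃ j₂² + α₁α₂ j₃² + α₂α₃ j₁²) (where the square root of a negative number is purely imaginary). -/
/-!
The map is `c • K D` with `c = i`, `D = diagonal α` and `K` the matrix of `v ↦ j × v`.
Since `K` is skew, `KD` has zero trace and zero determinant, and its principal `2 × 2` minors
are `α₂α₃ j₁², α₁α₃ j₂², α₁α₂ j₃²`. Hence `det (x - c K D) = x³ + c² s x` with `s` their sum,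
which for `c = i` is `x (x - √s) (x + √s)`.
-/

open Matrix

namespace Matrix

section CrossMatrix

variable {R : Type*} [CommRing R]

def crossMatrix (a : Fin 3 → R) : Matrix (Fin 3) (Fin 3) R :=
  !![0, -a 2, a 1; a 2, 0, -a 0; -a 1, a 0, 0]

theorem crossMatrix_mulVec (a v : Fin 3 → R) : crossMatrix a *ᵥ v = a ⨯₃ v := by
  ext i
  fin_cases i <;> simp [crossMatrix, cross_apply, mulVec, dotProduct, Fin.sum_univ_three] <;> ring

theorem eq_smul_crossMatrix_mul_diagonal {M : Matrix (Fin 3) (Fin 3) R} {c : R} {a d : Fin 3 → R}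
    (hM : ∀ v, M *ᵥ v = c • a ⨯₃ (diagonal d *ᵥ v)) : M = c • (crossMatrix a * diagonal d) :=
  ext_iff_mulVec.2 fun v => by rw [hM, smul_mulVec, ← mulVec_mulVec, crossMatrix_mulVec]

theorem det_scalar_sub_smul_crossMatrix_mul_diagonal (x c : R) (a d : Fin 3 → R) :
    (scalar (Fin 3) x - c • (crossMatrix a * diagonal d)).det =
      x ^ 3 + c ^ 2 * (d 0 * d 2 * a 1 ^ 2 + d 0 * d 1 * a 2 ^ 2 + d 1 * d 2 * a 0 ^ 2) * x := by
  simp only [det_fin_three, sub_apply, smul_apply, mul_diagonal]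
  simp [crossMatrix]
  ring

theorem mem_spectrum_smul_crossMatrix_mul_diagonal {K : Type*} [Field K] (x c : K)
    (a d : Fin 3 → K) :
    x ∈ spectrum K (c • (crossMatrix a * diagonal d)) ↔
      x ^ 3 + c ^ 2 * (d 0 * d 2 * a 1 ^ 2 + d 0 * d 1 * a 2 ^ 2 + d 1 * d 2 * a 0 ^ 2) * x = 0 := by
  rw [mem_spectrum_iff_isRoot_charpoly, Polynomial.IsRoot, eval_charpoly,
    det_scalar_sub_smul_crossMatrix_mul_diagonal]

end CrossMatrix

end Matrix

theorem cube_sub_sq_mul_eq_zero_iff {R : Type*} [CommRing R] [NoZeroDivisors R] {x r : R} :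
    x ^ 3 - r ^ 2 * x = 0 ↔ x = 0 ∨ x = r ∨ x = -r := by
  rw [show x ^ 3 - r ^ 2 * x = x * (x - r) * (x + r) by ring]
  simp only [mul_eq_zero, sub_eq_zero, add_eq_zero_iff_eq_neg, or_assoc]

theorem eigenvalues_of_cross_diag_general (α₁ α₂ α₃ : ℝ) (j : Fin 3 → ℝ)
    (M : Matrix (Fin 3) (Fin 3) ℂ)
    (hM : ∀ v : Fin 3 → ℂ, M.mulVec v =
      Complex.I • crossProduct (fun k => ((j k : ℝ) : ℂ))
        ((Matrix.diagonal ![(α₁ : ℂ), (α₂ : ℂ), (α₃ : ℂ)]).mulVec v)) :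
    spectrum ℂ M =
      {0,
       ((α₁ * α₃ * j 1 ^ 2 + α₁ * α₂ * j 2 ^ 2 + α₂ * α₃ * j 0 ^ 2 : ℝ) : ℂ) ^ ((2 : ℂ)⁻¹),
       -(((α₁ * α₃ * j 1 ^ 2 + α₁ * α₂ * j 2 ^ 2 + α₂ * α₃ * j 0 ^ 2 : ℝ) : ℂ) ^ ((2 : ℂ)⁻¹))} := by
  set s : ℂ := ((α₁ * α₃ * j 1 ^ 2 + α₁ * α₂ * j 2 ^ 2 + α₂ * α₃ * j 0 ^ 2 : ℝ) : ℂ)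
  have hsqrt : (s ^ (2 : ℂ)⁻¹) ^ 2 = s := Complex.cpow_ofNat_inv_pow s 2
  ext x
  rw [eq_smul_crossMatrix_mul_diagonal hM, mem_spectrum_smul_crossMatrix_mul_diagonal,
    Set.mem_insert_iff, Set.mem_insert_iff, Set.mem_singleton_iff, ← cube_sub_sq_mul_eq_zero_iff,
    hsqrt, Complex.I_sq]
  simp only [s, Matrix.cons_val]
  push_cast
  ring_nf

theorem eigenvalues_of_cross_diag (α₁ α₂ α₃ : ℝ) (j : Fin 3 → ℝ)
    (hj : j 0 ^ 2 + j 1 ^ 2 + j 2 ^ 2 = 1)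
    (M : Matrix (Fin 3) (Fin 3) ℂ)
    (hM : ∀ v : Fin 3 → ℂ, M.mulVec v =
      Complex.I • crossProduct (fun k => ((j k : ℝ) : ℂ))
        ((Matrix.diagonal ![(α₁ : ℂ), (α₂ : ℂ), (α₃ : ℂ)]).mulVec v)) :
    spectrum ℂ M =
      {0,
       ((α₁ * α₃ * j 1 ^ 2 + α₁ * α₂ * j 2 ^ 2 + α₂ * α₃ * j 0 ^ 2 : ℝ) : ℂ) ^ ((2 : ℂ)⁻¹),
       -(((α₁ * α₃ * j 1 ^ 2 + α₁ * α₂ * j 2 ^ 2 + α₂ * α₃ * j 0 ^ 2 : ℝ) : ℂ) ^ ((2 : ℂ)⁻¹))} :=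
  eigenvalues_of_cross_diag_general α₁ α₂ α₃ j M hM
end
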